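/- Let $G$ be a DAG and $G'$ the DAG obtained by adding a new sink $s$ adjacent from every vertex of $G$. If the shortest trek map of $G$ is well defined and $ST_G = \ker \psi_G$, then the shortest trek map of $G'$ is well defined and $\ker \psi_{G'}$ equals the extension of $\ker \psi_G$ to the larger polynomial ring; in particular no indeterminate of the form $\sigma_{is}$ ($i \in V(G')$) appears in any minimal generator of $\ker \psi_{G'}$. -/

import Mathlib

open MvPolynomial

/-- A (simple) trek in a directed graph with adjacency `Adj`: a pair of directed
paths from a common source (top) vertex down to `i` and down to `j`, with no
repeated vertices overall (i.e. a simple colliderless path between `i` and `j`). -/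
structure Trek {V : Type*} (Adj : V → V → Prop) (i j : V) where
  left : List V
  right : List V
  left_ne : left ≠ []
  right_ne : right ≠ []
  same_top : left.head? = right.head?
  chain_left : left.Chain' Adj
  chain_right : right.Chain' Adj
  last_left : left.getLast? = some i
  last_right : right.getLast? = some j
  nodup : (left ++ right.tail).Nodup

namespace Trek

variable {V : Type*} {Adj : V → V → Prop} {i j : V}

/-- The topmost (source) vertex of a trek. -/
def top (t : Trek Adj i j) : V := t.left.head t.left_ne

/-- The list of directed edges used by a trek. -/
def edges (t : Trek Adj i j) : List (V × V) :=
  t.left.zip t.left.tail ++ t.right.zip t.right.tail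

end Trek

/-- A trek is shortest if no trek between the same endpoints has fewer edges. -/
def IsShortestTrek {V : Type*} {Adj : V → V → Prop} {i j : V} (t : Trek Adj i j) : Prop :=
  ∀ t' : Trek Adj i j, t.edges.length ≤ t'.edges.length

/-- Between any two vertices there is a unique shortest trek (whenever some trek
exists); this is the condition for the shortest trek map to be well defined. -/
def ShortestTreksUnique {V : Type*} (Adj : V → V → Prop) : Prop :=
  ∀ (i j : V) (t t' : Trek Adj i j), IsShortestTrek t → IsShortestTrek t' →
    t'.left = t.left ∧ t'.right = t.right

/-- A DAG on vertex set `Fin n`, with all edges pointing from a smaller vertex to a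
larger one (vertices are numerically ordered, which guarantees acyclicity). -/
structure DAG (n : ℕ) where
  E : Finset (Fin n × Fin n)
  increasing : ∀ e ∈ E, e.1 < e.2

def DAG.Adj {n : ℕ} (G : DAG n) (i j : Fin n) : Prop := (i, j) ∈ G.E

/-- Index type for the indeterminates `σ_{ij}`, `1 ≤ i ≤ j ≤ n`. -/
abbrev SymIdx (n : ℕ) := {p : Fin n × Fin n // p.1 ≤ p.2}

/-- The monomial `a_{top t} * ∏_{(k,l) ∈ t} λ_{kl}` associated to a trek `t`, in the
polynomial ring `ℂ[a_i, λ_{kl}]` (where `a_i = X (Sum.inl i)`, `λ_{kl} = X (Sum.inr (k,l))`). -/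
noncomputable def trekMonomial {n : ℕ} {Adj : Fin n → Fin n → Prop} {i j : Fin n}
    (t : Trek Adj i j) : MvPolynomial (Fin n ⊕ Fin n × Fin n) ℂ :=
  X (Sum.inl t.top) *
    (t.edges.map fun e => (X (Sum.inr e) : MvPolynomial (Fin n ⊕ Fin n × Fin n) ℂ)).prod

/-- `ψ` is the shortest trek map of `G`: it sends `σ_{ij}` to `0` when there is no trek
between `i` and `j`, and to the monomial of the (unique) shortest trek otherwise
(for `i = j` the unique trek is trivial and the monomial is `a_i`). -/
def IsShortestTrekMap {n : ℕ} (G : DAG n)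
    (ψ : MvPolynomial (SymIdx n) ℂ →ₐ[ℂ] MvPolynomial (Fin n ⊕ Fin n × Fin n) ℂ) : Prop :=
  ∀ p : SymIdx n,
    (IsEmpty (Trek G.Adj p.1.1 p.1.2) → ψ (X p) = 0) ∧
    (∀ t : Trek G.Adj p.1.1 p.1.2, IsShortestTrek t → ψ (X p) = trekMonomial t)

/-- The DAG obtained from `G` by adding a new vertex `s = Fin.last n` together with
all edges `i → s` for `i ∈ V(G)`. -/
def addSink {n : ℕ} (G : DAG n) : DAG (n + 1) where
  E := G.E.image (fun e => (e.1.castSucc, e.2.castSucc)) ∪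
       Finset.univ.image (fun i : Fin n => (i.castSucc, Fin.last n))
  increasing := by
    intro e he
    simp only [Finset.mem_union, Finset.mem_image, Finset.mem_univ, true_and] at he
    rcases he with ⟨a, ha, rfl⟩ | ⟨i, rfl⟩
    · exact Fin.castSucc_lt_castSucc_iff.mpr (G.increasing a ha)
    · exact Fin.castSucc_lt_last i

/-- The inclusion of the indeterminates `σ_{ij}` of `G` into those of `addSink G`. -/
def liftIdx (n : ℕ) (p : SymIdx n) : SymIdx (n + 1) :=
  ⟨(p.1.1.castSucc, p.1.2.castSucc), Fin.castSucc_le_castSucc_iff.mpr p.2⟩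


/-!
The new sink `s` has no outgoing edges, so it lies on no trek between two old vertices: treks of
`G` and of `addSink G` between old vertices correspond, and `ψ'` extends `ψ`. The shortest trek from
an old vertex `i` to `s` is the edge `i → s`, so `ψ'(σ_{is}) = a_i λ_{is}` and `ψ'(σ_{ss}) = a_s`.
Read polynomials in the `σ_{ij}` as polynomials in the `σ_{is}` over the old indeterminates, and
specialize the parameters of `G` to constants and `λ_{is}`, `a_s` to fresh variables `x_i`. Then
`ψ'` becomes `ψ` on coefficients followed by the injective rescaling `x_i ↦ a_i x_i`, so a
polynomial lies in `ker ψ'` exactly when all its coefficients lie in `ker ψ`.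
-/

theorem List.IsChain.eq_of_mem_of_forall_not_rel {α : Type*} {R : α → α → Prop} {x v : α} :
    ∀ {l : List α}, l.IsChain R → l.getLast? = some v → x ∈ l → (∀ y, ¬ R x y) → x = v
  | [], _, _, hx, _ => absurd hx List.not_mem_nil
  | [a], _, hl, hx, _ => by simp_all
  | a :: b :: l, hc, hl, hx, hsink => by
    rw [List.isChain_cons_cons] at hc
    rcases List.mem_cons.1 hx with rfl | hx
    · exact absurd hc.1 (hsink b)
    · exact hc.2.eq_of_mem_of_forall_not_rel (by rwa [List.getLast?_cons_cons] at hl) hx hsink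

def HasUniqueShortestTrek {V : Type*} (Adj : V → V → Prop) (i j : V) : Prop :=
  ∀ t t' : Trek Adj i j, IsShortestTrek t → IsShortestTrek t' →
    t'.left = t.left ∧ t'.right = t.right

namespace Trek

variable {V W : Type*} {Adj : V → V → Prop} {Adj' : W → W → Prop} {i j : V}

theorem ext {t t' : Trek Adj i j} (hl : t.left = t'.left) (hr : t.right = t'.right) :
    t = t' := by
  cases t; cases t'; cases hl; cases hr; rfl

theorem edges_length (t : Trek Adj i j) :
    t.edges.length = (t.left.length - 1) + (t.right.length - 1) := by
  simp only [edges, List.length_append, List.length_zip, List.length_tail]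
  omega

theorem exists_isShortestTrek [Nonempty (Trek Adj i j)] : ∃ t : Trek Adj i j, IsShortestTrek t :=
  ⟨Function.argmin (fun t : Trek Adj i j => t.edges.length),
    fun t => Function.argmin_le (fun t : Trek Adj i j => t.edges.length) t⟩

theorem one_le_edges_length (hij : i ≠ j) (t : Trek Adj i j) : 1 ≤ t.edges.length := by
  by_contra! h
  rw [edges_length] at h
  have hl := List.length_pos_iff.2 t.left_ne
  have hr := List.length_pos_iff.2 t.right_ne
  obtain ⟨a, ha⟩ := List.length_eq_one_iff.1 (show t.left.length = 1 by omega)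
  obtain ⟨b, hb⟩ := List.length_eq_one_iff.1 (show t.right.length = 1 by omega)
  have hi := t.last_left
  have hj := t.last_right
  have htop := t.same_top
  simp only [ha, hb, List.getLast?_singleton, List.head?_cons, Option.some.injEq] at hi hj htop
  exact hij (hi.symm.trans (htop.trans hj))

def refl (i : V) : Trek Adj i i where
  left := [i]
  right := [i]
  left_ne := List.cons_ne_nil _ _
  right_ne := List.cons_ne_nil _ _
  same_top := rfl
  chain_left := List.isChain_singleton _
  chain_right := List.isChain_singleton _
  last_left := rfl
  last_right := rfl
  nodup := List.nodup_singleton _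

theorem isShortestTrek_refl (i : V) : IsShortestTrek (refl (Adj := Adj) i) :=
  fun _ => Nat.zero_le _

theorem left_right_eq_of_self (t : Trek Adj i i) : t.left = [i] ∧ t.right = [i] := by
  have hi_left : i ∈ t.left := List.mem_of_getLast? t.last_left
  have hright : t.right = [i] := by
    obtain ⟨a, r, hr⟩ := List.exists_cons_of_ne_nil t.right_ne
    have hlast := t.last_right
    rcases r with _ | ⟨b, r⟩
    · simpa [hr] using hlast
    · rw [hr, List.getLast?_cons_cons] at hlast
      have := List.disjoint_of_nodup_append t.nodup hi_left
      simp [hr, List.mem_of_getLast? hlast] at this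
  refine ⟨?_, hright⟩
  have hhead : t.left.head t.left_ne = t.left.getLast t.left_ne := by
    have h1 := t.same_top
    have h2 := t.last_left
    rw [hright, List.head?_eq_some_head t.left_ne] at h1
    rw [List.getLast?_eq_some_getLast t.left_ne] at h2
    simp only [List.head?_cons, Option.some.injEq] at h1 h2
    rw [h1, h2]
  obtain ⟨x, hx⟩ := (List.Nodup.head_eq_getLast_iff t.left_ne
    (List.nodup_append.1 t.nodup).1).1 hhead
  have := t.last_left
  simp only [hx, List.getLast?_singleton, Option.some.injEq] at this
  rw [hx, this]

theorem hasUniqueShortestTrek_self (i : V) : HasUniqueShortestTrek Adj i i := fun t t' _ _ =>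
  ⟨(left_right_eq_of_self t').1.trans (left_right_eq_of_self t).1.symm,
    (left_right_eq_of_self t').2.trans (left_right_eq_of_self t).2.symm⟩

def ofAdj (hij : Adj i j) (hne : i ≠ j) : Trek Adj i j where
  left := [i]
  right := [i, j]
  left_ne := List.cons_ne_nil _ _
  right_ne := List.cons_ne_nil _ _
  same_top := rfl
  chain_left := List.isChain_singleton _
  chain_right := List.isChain_pair.2 hij
  last_left := rfl
  last_right := rfl
  nodup := by simpa using hne

theorem isShortestTrek_ofAdj (hij : Adj i j) (hne : i ≠ j) : IsShortestTrek (ofAdj hij hne) :=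
  one_le_edges_length hne

theorem left_right_eq_of_edges_length_eq_one (hji : ¬ Adj j i) (t : Trek Adj i j)
    (h : t.edges.length = 1) : t.left = [i] ∧ t.right = [i, j] := by
  rw [edges_length] at h
  have hl := List.length_pos_iff.2 t.left_ne
  have hr := List.length_pos_iff.2 t.right_ne
  have hi := t.last_left
  have hj := t.last_right
  have htop := t.same_top
  have hcl := t.chain_left
  rcases (show (t.left.length = 1 ∧ t.right.length = 2) ∨
      (t.left.length = 2 ∧ t.right.length = 1) by omega) with ⟨hA, hB⟩ | ⟨hA, hB⟩
  · obtain ⟨a, ha⟩ := List.length_eq_one_iff.1 hA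
    obtain ⟨b, c, hbc⟩ := List.length_eq_two.1 hB
    simp only [ha, hbc, List.getLast?_singleton, List.getLast?_cons_cons, List.head?_cons,
      Option.some.injEq] at hi hj htop
    subst hi hj htop
    exact ⟨ha, hbc⟩
  · obtain ⟨a, c, hac⟩ := List.length_eq_two.1 hA
    obtain ⟨b, hb⟩ := List.length_eq_one_iff.1 hB
    simp only [hac, hb, List.getLast?_singleton, List.getLast?_cons_cons, List.head?_cons,
      Option.some.injEq] at hi hj htop hcl
    subst hi hj htop
    exact absurd (List.isChain_pair.1 hcl) hji

theorem hasUniqueShortestTrek_of_adj (hij : Adj i j) (hji : ¬ Adj j i) :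
    HasUniqueShortestTrek Adj i j := by
  have hne : i ≠ j := fun h => hji (h ▸ hij)
  have hshape : ∀ t : Trek Adj i j, IsShortestTrek t → t.left = [i] ∧ t.right = [i, j] :=
    fun t ht => left_right_eq_of_edges_length_eq_one hji t
      (le_antisymm (ht (ofAdj hij hne)) (one_le_edges_length hne t))
  intro t t' ht ht'
  exact ⟨(hshape t' ht').1.trans (hshape t ht).1.symm, (hshape t' ht').2.trans (hshape t ht).2.symm⟩

def symm (t : Trek Adj i j) : Trek Adj j i where
  left := t.right
  right := t.left
  left_ne := t.right_ne
  right_ne := t.left_ne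
  same_top := t.same_top.symm
  chain_left := t.chain_right
  chain_right := t.chain_left
  last_left := t.last_right
  last_right := t.last_left
  nodup := by
    obtain ⟨a, l, hl⟩ := List.exists_cons_of_ne_nil t.left_ne
    obtain ⟨b, r, hr⟩ := List.exists_cons_of_ne_nil t.right_ne
    have hab : a = b := by simpa [hl, hr] using t.same_top
    have h := t.nodup
    rw [hl, hr, hab] at h ⊢
    exact ((List.perm_append_comm (l₁ := l) (l₂ := r)).cons b).nodup_iff.1 h

theorem symm_edges_length (t : Trek Adj i j) : t.symm.edges.length = t.edges.length := by
  rw [edges_length, edges_length, Nat.add_comm]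
  rfl

def map (f : V → W) (hf : Function.Injective f) (hadj : ∀ ⦃a b⦄, Adj a b → Adj' (f a) (f b))
    (t : Trek Adj i j) : Trek Adj' (f i) (f j) where
  left := t.left.map f
  right := t.right.map f
  left_ne := by simpa using t.left_ne
  right_ne := by simpa using t.right_ne
  same_top := by rw [List.head?_map, List.head?_map, t.same_top]
  chain_left := (List.isChain_map f).2 (t.chain_left.imp hadj)
  chain_right := (List.isChain_map f).2 (t.chain_right.imp hadj)
  last_left := by rw [List.getLast?_map, t.last_left, Option.map_some]
  last_right := by rw [List.getLast?_map, t.last_right, Option.map_some]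
  nodup := by
    rw [← List.map_tail, ← List.map_append]
    exact (List.nodup_map_iff hf).2 t.nodup

variable {f : V → W} {hf : Function.Injective f} {hadj : ∀ ⦃a b⦄, Adj a b → Adj' (f a) (f b)}

theorem map_edges (t : Trek Adj i j) :
    (t.map f hf hadj).edges = t.edges.map (Prod.map f f) := by
  simp only [edges, map, ← List.map_tail, List.zip_map, List.map_append]

theorem map_edges_length (t : Trek Adj i j) :
    (t.map f hf hadj).edges.length = t.edges.length := by
  rw [map_edges, List.length_map]

theorem map_top (t : Trek Adj i j) : (t.map f hf hadj).top = f t.top :=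
  List.head_map ..

theorem exists_map_eq (hadj' : ∀ ⦃a b⦄, Adj' (f a) (f b) → Adj a b) (t' : Trek Adj' (f i) (f j))
    {l r : List V} (hl : t'.left = l.map f) (hr : t'.right = r.map f) :
    ∃ t : Trek Adj i j, t.map f hf hadj = t' := by
  have hlast : ∀ {k : List V} {v : V}, (k.map f).getLast? = some (f v) → k.getLast? = some v :=
    fun h => Option.map_injective hf (by rwa [← List.getLast?_map])
  refine ⟨⟨l, r, ?_, ?_, ?_, ?_, ?_, ?_, ?_, ?_⟩, ext hl.symm hr.symm⟩
  · rintro rfl; exact t'.left_ne hl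
  · rintro rfl; exact t'.right_ne hr
  · have h := t'.same_top
    rw [hl, hr, List.head?_map, List.head?_map] at h
    exact Option.map_injective hf h
  · exact ((List.isChain_map f).1 (hl ▸ t'.chain_left)).imp fun _ _ h => hadj' h
  · exact ((List.isChain_map f).1 (hr ▸ t'.chain_right)).imp fun _ _ h => hadj' h
  · exact hlast (hl ▸ t'.last_left)
  · exact hlast (hr ▸ t'.last_right)
  · have h := t'.nodup
    rw [hl, hr, ← List.map_tail, ← List.map_append] at h
    exact (List.nodup_map_iff hf).1 h

theorem notMem_of_forall_not_adj {s : V}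
    (hs : ∀ y, ¬ Adj s y) (hi : s ≠ i) (hj : s ≠ j) (t : Trek Adj i j) :
    s ∉ t.left ∧ s ∉ t.right :=
  ⟨fun h => hi (t.chain_left.eq_of_mem_of_forall_not_rel t.last_left h hs),
    fun h => hj (t.chain_right.eq_of_mem_of_forall_not_rel t.last_right h hs)⟩

end Trek

theorem IsShortestTrek.symm {V : Type*} {Adj : V → V → Prop} {i j : V} {t : Trek Adj i j}
    (ht : IsShortestTrek t) : IsShortestTrek t.symm :=
  fun u => by simpa only [Trek.symm_edges_length] using ht u.symm

theorem HasUniqueShortestTrek.symm {V : Type*} {Adj : V → V → Prop} {i j : V}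
    (h : HasUniqueShortestTrek Adj i j) : HasUniqueShortestTrek Adj j i :=
  fun t t' ht ht' => (h t.symm t'.symm (IsShortestTrek.symm ht) (IsShortestTrek.symm ht')).symm

theorem DAG.not_adj_last {n : ℕ} (G : DAG (n + 1)) (y : Fin (n + 1)) : ¬ G.Adj (Fin.last n) y :=
  fun h => (G.increasing _ h).not_ge (Fin.le_last y)

instance Fin.canLiftCastSucc (n : ℕ) :
    CanLift (Fin (n + 1)) (Fin n) Fin.castSucc (· ≠ Fin.last n) where
  prf _ hi := Fin.exists_castSucc_eq.2 hi

section AddSink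

variable {n : ℕ} {G : DAG n}

theorem addSink_adj_castSucc {i j : Fin n} :
    (addSink G).Adj i.castSucc j.castSucc ↔ G.Adj i j := by
  simp [DAG.Adj, addSink, (Fin.castSucc_ne_last j).symm]

theorem addSink_adj_last (i : Fin n) : (addSink G).Adj i.castSucc (Fin.last n) := by
  simp [DAG.Adj, addSink]

def liftTrek {i j : Fin n} (t : Trek G.Adj i j) : Trek (addSink G).Adj i.castSucc j.castSucc :=
  t.map Fin.castSucc (Fin.castSucc_injective n) fun _ _ => addSink_adj_castSucc.2

theorem exists_liftTrek_eq {i j : Fin n} (t' : Trek (addSink G).Adj i.castSucc j.castSucc) :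
    ∃ t : Trek G.Adj i j, liftTrek t = t' := by
  obtain ⟨hl, hr⟩ := Trek.notMem_of_forall_not_adj ((addSink G).not_adj_last)
    (Fin.castSucc_ne_last i).symm (Fin.castSucc_ne_last j).symm t'
  lift t'.left to List (Fin n) using fun x hx h => hl (h ▸ hx) with l hl'
  lift t'.right to List (Fin n) using fun x hx h => hr (h ▸ hx) with r hr'
  exact Trek.exists_map_eq (f := Fin.castSucc) (fun _ _ => addSink_adj_castSucc.1) t'
    hl'.symm hr'.symm

theorem isShortestTrek_liftTrek_iff {i j : Fin n} {t : Trek G.Adj i j} :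
    IsShortestTrek (liftTrek t) ↔ IsShortestTrek t := by
  refine ⟨fun h u => ?_, fun h u => ?_⟩
  · simpa only [liftTrek, Trek.map_edges_length] using h (liftTrek u)
  · obtain ⟨u, rfl⟩ := exists_liftTrek_eq u
    simpa only [liftTrek, Trek.map_edges_length] using h u

theorem HasUniqueShortestTrek.addSink {i j : Fin n} (h : HasUniqueShortestTrek G.Adj i j) :
    HasUniqueShortestTrek (addSink G).Adj i.castSucc j.castSucc := by
  intro t t' ht ht'
  obtain ⟨t, rfl⟩ := exists_liftTrek_eq t
  obtain ⟨t', rfl⟩ := exists_liftTrek_eq t'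
  obtain ⟨hl, hr⟩ := h t t' (isShortestTrek_liftTrek_iff.1 ht) (isShortestTrek_liftTrek_iff.1 ht')
  exact ⟨congrArg (List.map _) hl, congrArg (List.map _) hr⟩

theorem shortestTreksUnique_addSink (h : ShortestTreksUnique G.Adj) :
    ShortestTreksUnique (addSink G).Adj := by
  have hsink (i : Fin n) : HasUniqueShortestTrek (addSink G).Adj i.castSucc (Fin.last n) :=
    Trek.hasUniqueShortestTrek_of_adj (addSink_adj_last i) ((addSink G).not_adj_last _)
  intro i j
  induction i using Fin.lastCases with
  | last => induction j using Fin.lastCases with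
    | last => exact Trek.hasUniqueShortestTrek_self _
    | cast j => exact (hsink j).symm
  | cast i => induction j using Fin.lastCases with
    | last => exact hsink i
    | cast j => exact HasUniqueShortestTrek.addSink (h i j)

end AddSink

namespace MvPolynomial

variable {κ R S : Type*} [CommRing R] [CommRing S] {Φ : MvPolynomial κ R →+* MvPolynomial κ S}
  {ρ : R →+* S} {b : κ → S}

theorem coeff_of_map_X_eq_C_mul_X (hC : ∀ r, Φ (C r) = C (ρ r))
    (hX : ∀ i, Φ (X i) = C (b i) * X i) (F : MvPolynomial κ R) (m : κ →₀ ℕ) :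
    coeff m (Φ F) = ρ (coeff m F) * m.prod fun i e => b i ^ e := by
  classical
  induction F using MvPolynomial.induction_on' with
  | monomial u a =>
    have hmon : Φ (monomial u a) = monomial u (ρ a * u.prod fun i e => b i ^ e) := by
      simp only [monomial_eq, map_mul, hC, map_finsuppProd, map_pow, hX, mul_pow,
        Finsupp.prod_mul]
      ring
    rw [hmon, coeff_monomial, coeff_monomial]
    split_ifs with hum
    · rw [hum]
    · rw [map_zero, zero_mul]
  | add p q hp hq => rw [map_add, coeff_add, coeff_add, hp, hq, map_add, add_mul]

theorem ker_eq_map_C_of_map_X_eq_C_mul_X [IsDomain S] (hb : ∀ i, b i ≠ 0)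
    (hC : ∀ r, Φ (C r) = C (ρ r)) (hX : ∀ i, Φ (X i) = C (b i) * X i) :
    RingHom.ker Φ = Ideal.map C (RingHom.ker ρ) := by
  ext F
  have hprod (m : κ →₀ ℕ) : (m.prod fun i e => b i ^ e) ≠ 0 :=
    Finset.prod_ne_zero_iff.2 fun i _ => pow_ne_zero _ (hb i)
  simp only [RingHom.mem_ker, mem_map_C_iff, MvPolynomial.ext_iff, coeff_zero,
    coeff_of_map_X_eq_C_mul_X hC hX, mul_eq_zero, hprod, or_false]

end MvPolynomial

section KernelAddSink

variable {n : ℕ} {G : DAG n}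
  {ψ : MvPolynomial (SymIdx n) ℂ →ₐ[ℂ] MvPolynomial (Fin n ⊕ Fin n × Fin n) ℂ}
  {ψ' : MvPolynomial (SymIdx (n + 1)) ℂ →ₐ[ℂ]
    MvPolynomial (Fin (n + 1) ⊕ Fin (n + 1) × Fin (n + 1)) ℂ}

/-- The new indeterminate `σ_{is}`. -/
def sinkIdx (n : ℕ) (i : Fin (n + 1)) : SymIdx (n + 1) := ⟨(i, Fin.last n), Fin.le_last i⟩

theorem sinkIdx_or_liftIdx (p : SymIdx (n + 1)) :
    (∃ i, sinkIdx n i = p) ∨ ∃ q, liftIdx n q = p := by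
  obtain ⟨⟨i, j⟩, hij⟩ := p
  induction j using Fin.lastCases with
  | last => exact .inl ⟨i, rfl⟩
  | cast j =>
    lift i to Fin n using ne_of_lt (hij.trans_lt (Fin.castSucc_lt_last j))
    exact .inr ⟨⟨(i, j), Fin.castSucc_le_castSucc_iff.1 hij⟩, rfl⟩

/-- `ℂ[σ_{ij} : i ≤ j ≤ s]` as polynomials in the `σ_{is}` over `ℂ[σ_{ij} : i ≤ j < s]`. -/
noncomputable def joinSink (n : ℕ) :
    MvPolynomial (Fin (n + 1)) (MvPolynomial (SymIdx n) ℂ) →+* MvPolynomial (SymIdx (n + 1)) ℂ :=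
  eval₂Hom (rename (liftIdx n)).toRingHom fun i => X (sinkIdx n i)

theorem joinSink_surjective : Function.Surjective (joinSink n) := by
  intro f
  induction f using MvPolynomial.induction_on with
  | C a => exact ⟨C (C a), by simp [joinSink]⟩
  | add p q hp hq =>
    obtain ⟨P, rfl⟩ := hp
    obtain ⟨Q, rfl⟩ := hq
    exact ⟨P + Q, map_add _ _ _⟩
  | mul_X p k hp =>
    obtain ⟨P, rfl⟩ := hp
    have hk : X k ∈ Set.range (joinSink n) := by
      rcases sinkIdx_or_liftIdx k with ⟨i, rfl⟩ | ⟨q, rfl⟩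
      · exact ⟨X i, eval₂Hom_X' _ _ _⟩
      · exact ⟨C (X q), by simp [joinSink]⟩
    obtain ⟨K, hK⟩ := hk
    exact ⟨P * K, by rw [map_mul, hK]⟩

def mapParam {m n : ℕ} (f : Fin m → Fin n) : Fin m ⊕ Fin m × Fin m → Fin n ⊕ Fin n × Fin n :=
  Sum.map f (Prod.map f f)

theorem trekMonomial_map {m : ℕ} {Adj : Fin m → Fin m → Prop} {Adj' : Fin n → Fin n → Prop}
    {i j : Fin m} {f : Fin m → Fin n} {hf : Function.Injective f}
    {hadj : ∀ ⦃a b⦄, Adj a b → Adj' (f a) (f b)} (t : Trek Adj i j) :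
    trekMonomial (t.map f hf hadj) = rename (mapParam f) (trekMonomial t) := by
  simp only [trekMonomial, map_mul, rename_X, Trek.map_top, Trek.map_edges, map_list_prod,
    List.map_map, Function.comp_def]
  rfl

theorem trekMonomial_refl {Adj : Fin n → Fin n → Prop} (i : Fin n) :
    trekMonomial (Trek.refl (Adj := Adj) i) = X (Sum.inl i) := by
  simp [trekMonomial, Trek.refl, Trek.top, Trek.edges]

theorem trekMonomial_ofAdj {Adj : Fin n → Fin n → Prop} {i j : Fin n} (hij : Adj i j)
    (hne : i ≠ j) : trekMonomial (Trek.ofAdj hij hne) = X (Sum.inl i) * X (Sum.inr (i, j)) := by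
  simp [trekMonomial, Trek.ofAdj, Trek.top, Trek.edges]

theorem IsShortestTrekMap.comp_rename_liftIdx (hψ : IsShortestTrekMap G ψ)
    (hψ' : IsShortestTrekMap (addSink G) ψ') :
    ψ'.comp (rename (liftIdx n)) = (rename (mapParam Fin.castSucc)).comp ψ := by
  refine algHom_ext fun q => ?_
  simp only [AlgHom.comp_apply, rename_X]
  rcases isEmpty_or_nonempty (Trek G.Adj q.1.1 q.1.2) with hempty | hne
  · have hempty' : IsEmpty (Trek (addSink G).Adj q.1.1.castSucc q.1.2.castSucc) :=
      ⟨fun t' => hempty.false (exists_liftTrek_eq t').choose⟩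
    rw [(hψ q).1 hempty, (hψ' (liftIdx n q)).1 hempty', map_zero]
  · obtain ⟨t, ht⟩ := Trek.exists_isShortestTrek (Adj := G.Adj) (i := q.1.1) (j := q.1.2)
    rw [(hψ q).2 t ht, (hψ' (liftIdx n q)).2 (liftTrek t) (isShortestTrek_liftTrek_iff.2 ht)]
    exact trekMonomial_map t

theorem IsShortestTrekMap.apply_X_sinkIdx_castSucc (hψ' : IsShortestTrekMap (addSink G) ψ')
    (i : Fin n) :
    ψ' (X (sinkIdx n i.castSucc)) =
      X (Sum.inl i.castSucc) * X (Sum.inr (i.castSucc, Fin.last n)) :=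
  ((hψ' _).2 _ (Trek.isShortestTrek_ofAdj (addSink_adj_last i) (Fin.castSucc_ne_last i))).trans
    (trekMonomial_ofAdj _ _)

theorem IsShortestTrekMap.apply_X_sinkIdx_last (hψ' : IsShortestTrekMap (addSink G) ψ') :
    ψ' (X (sinkIdx n (Fin.last n))) = X (Sum.inl (Fin.last n)) :=
  ((hψ' _).2 _ (Trek.isShortestTrek_refl (Fin.last n))).trans (trekMonomial_refl _)

/-- Sends `a_s` and `λ_{is}` to the variable `i` and the parameters of `G` to constants; the
value on the remaining parameters is irrelevant. -/
noncomputable def splitSinkParam (n : ℕ) :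
    Fin (n + 1) ⊕ Fin (n + 1) × Fin (n + 1) →
      MvPolynomial (Fin (n + 1)) (MvPolynomial (Fin n ⊕ Fin n × Fin n) ℂ)
  | .inl i => Fin.lastCases (X (Fin.last n)) (fun i => C (X (.inl i))) i
  | .inr (i, j) =>
    Fin.lastCases (X i) (fun j => Fin.lastCases 0 (fun i => C (X (.inr (i, j)))) i) j

noncomputable def splitSink (n : ℕ) :
    MvPolynomial (Fin (n + 1) ⊕ Fin (n + 1) × Fin (n + 1)) ℂ →ₐ[ℂ]
      MvPolynomial (Fin (n + 1)) (MvPolynomial (Fin n ⊕ Fin n × Fin n) ℂ) :=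
  aeval (splitSinkParam n)

theorem splitSink_rename_mapParam (g : MvPolynomial (Fin n ⊕ Fin n × Fin n) ℂ) :
    splitSink n (rename (mapParam Fin.castSucc) g) = C g := by
  have h : (splitSink n).comp (rename (mapParam Fin.castSucc)) =
      IsScalarTower.toAlgHom ℂ (MvPolynomial (Fin n ⊕ Fin n × Fin n) ℂ) _ :=
    algHom_ext fun x => by
      rcases x with i | ⟨i, j⟩ <;> simp [splitSink, splitSinkParam, mapParam]
  exact DFunLike.congr_fun h g

/-- `ψ'(σ_{is}) = a_i λ_{is}` and `ψ'(σ_{ss}) = a_s`: the factor in front of the new parameter. -/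
noncomputable def sinkWeight (n : ℕ) : Fin (n + 1) → MvPolynomial (Fin n ⊕ Fin n × Fin n) ℂ :=
  Fin.lastCases 1 fun i => X (.inl i)

theorem sinkWeight_ne_zero (i : Fin (n + 1)) : sinkWeight n i ≠ 0 := by
  induction i using Fin.lastCases <;> simp [sinkWeight, X_ne_zero]

theorem IsShortestTrekMap.splitSink_apply_X_sinkIdx (hψ' : IsShortestTrekMap (addSink G) ψ')
    (i : Fin (n + 1)) : splitSink n (ψ' (X (sinkIdx n i))) = C (sinkWeight n i) * X i := by
  induction i using Fin.lastCases with
  | last =>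
    rw [hψ'.apply_X_sinkIdx_last, sinkWeight, Fin.lastCases_last, C_1, one_mul]
    simp only [splitSink, aeval_X, splitSinkParam, Fin.lastCases_last]
  | cast i =>
    rw [hψ'.apply_X_sinkIdx_castSucc, sinkWeight, Fin.lastCases_castSucc, map_mul]
    simp only [splitSink, aeval_X, splitSinkParam, Fin.lastCases_last, Fin.lastCases_castSucc]

theorem ker_eq_map_rename_liftIdx (hψ : IsShortestTrekMap G ψ)
    (hψ' : IsShortestTrekMap (addSink G) ψ') :
    RingHom.ker ψ'.toRingHom =
      Ideal.map (rename (liftIdx n)).toRingHom (RingHom.ker ψ.toRingHom) := by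
  have hlift (r : MvPolynomial (SymIdx n) ℂ) :
      ψ' (rename (liftIdx n) r) = rename (mapParam Fin.castSucc) (ψ r) :=
    AlgHom.congr_fun (IsShortestTrekMap.comp_rename_liftIdx hψ hψ') r
  refine le_antisymm (fun f hf => ?_) (Ideal.map_le_iff_le_comap.2 fun c hc => ?_)
  · obtain ⟨F, rfl⟩ := joinSink_surjective f
    let Φ := (splitSink n).toRingHom.comp (ψ'.toRingHom.comp (joinSink n))
    have hC (r : MvPolynomial (SymIdx n) ℂ) : Φ (C r) = C (ψ r) := by
      simp only [Φ, RingHom.comp_apply, joinSink, eval₂Hom_C, AlgHom.toRingHom_eq_coe,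
        RingHom.coe_coe, hlift, splitSink_rename_mapParam]
    have hX (i : Fin (n + 1)) : Φ (X i) = C (sinkWeight n i) * X i := by
      simp only [Φ, RingHom.comp_apply, joinSink, eval₂Hom_X', AlgHom.toRingHom_eq_coe,
        RingHom.coe_coe, hψ'.splitSink_apply_X_sinkIdx]
    have hF : F ∈ RingHom.ker Φ := by
      rw [RingHom.mem_ker] at hf ⊢
      simp only [Φ, RingHom.comp_apply, hf, map_zero]
    rw [MvPolynomial.ker_eq_map_C_of_map_X_eq_C_mul_X sinkWeight_ne_zero hC hX] at hF
    have := Ideal.mem_map_of_mem (joinSink n) hF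
    rwa [Ideal.map_map, joinSink, eval₂Hom_comp_C] at this
  · rw [RingHom.mem_ker, AlgHom.toRingHom_eq_coe, RingHom.coe_coe] at hc
    rw [Ideal.mem_comap, RingHom.mem_ker]
    simp only [AlgHom.toRingHom_eq_coe, RingHom.coe_coe, hlift, hc, map_zero]

end KernelAddSink

theorem stmt12 (n : ℕ) (G : DAG n) (hst : ShortestTreksUnique G.Adj)
    (ψ : MvPolynomial (SymIdx n) ℂ →ₐ[ℂ] MvPolynomial (Fin n ⊕ Fin n × Fin n) ℂ)
    (hψ : IsShortestTrekMap G ψ) :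
    ShortestTreksUnique (addSink G).Adj ∧
    ∀ (ψ' : MvPolynomial (SymIdx (n + 1)) ℂ →ₐ[ℂ]
        MvPolynomial (Fin (n + 1) ⊕ Fin (n + 1) × Fin (n + 1)) ℂ),
      IsShortestTrekMap (addSink G) ψ' →
      RingHom.ker ψ'.toRingHom =
        Ideal.map (MvPolynomial.rename (liftIdx n)).toRingHom (RingHom.ker ψ.toRingHom) ∧
      ∃ B : Set (MvPolynomial (SymIdx (n + 1)) ℂ),
        RingHom.ker ψ'.toRingHom = Ideal.span B ∧
        ∀ f ∈ B, ∀ p ∈ f.vars, p.1.2 ≠ Fin.last n := by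
  classical
  refine ⟨shortestTreksUnique_addSink hst, fun ψ' hψ' => ?_⟩
  have hker := ker_eq_map_rename_liftIdx hψ hψ'
  refine ⟨hker, (rename (liftIdx n)).toRingHom '' RingHom.ker ψ.toRingHom, hker, ?_⟩
  rintro _ ⟨g, -, rfl⟩ p hp
  obtain ⟨q, -, rfl⟩ := Finset.mem_image.1 (vars_rename (liftIdx n) g hp)
  exact Fin.castSucc_ne_last _
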